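/- arXiv:2512.19348 — 2 statements merged into one kernel-verified Lean document; each statement's English description precedes it below -/
import Mathlib

section
/- Let A be a commutative ring, let f ∈ A be a nonzerodivisor, and let M be an A-module. Then M is flat over A if and only if the following three conditions hold: (i) multiplication by f is injective on M; (ii) the quotient M/fM is a flat module over the quotient ring A/(f); and (iii) the localization M_f is a flat module over the localization A_f. -/
/-!
By the equational criterion, take a relation `∑ aᵢ xᵢ = 0` in `M`. It becomes trivial in `M_f`,
and clearing denominators shows that the relation `∑ aᵢ (fⁿ xᵢ) = 0` is trivial in `M`. It then
suffices to divide by `f` once: if `f xᵢ = ∑ cᵢⱼ yⱼ` with `∑ aᵢ cᵢⱼ = 0`, the relations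
`∑ c̄ᵢⱼ ȳⱼ = 0` in `M/fM` are simultaneously trivial by flatness over `A/(f)`, say
`ȳⱼ = ∑ d̄ⱼₖ w̄ₖ` with `∑ c̄ᵢⱼ d̄ⱼₖ = 0`. Lifting, `yⱼ = ∑ dⱼₖ wₖ + f uⱼ` and
`∑ cᵢⱼ dⱼₖ = eᵢₖ f`, so `xᵢ = ∑ eᵢₖ wₖ + ∑ cᵢⱼ uⱼ` because `f` is regular on `M`; this
trivialises the relation since `(∑ aᵢ eᵢₖ) f = 0` and `f` is a nonzerodivisor of `A`.
-/

theorem Submodule.mem_ideal_span_singleton_smul_top {R M : Type*} [CommSemiring R]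
    [AddCommMonoid M] [Module R M] {f : R} {z : M} :
    z ∈ (Ideal.span {f} • ⊤ : Submodule R M) ↔ ∃ u, f • u = z := by
  rw [Submodule.ideal_span_singleton_smul, Submodule.mem_smul_pointwise_iff_exists]
  simp

theorem IsLocalizedModule.exists_smul_eq_smul_of_forall_eq {R M Mₛ : Type*} [CommSemiring R]
    [AddCommMonoid M] [Module R M] [AddCommMonoid Mₛ] [Module R Mₛ] (S : Submonoid R)
    (g : M →ₗ[R] Mₛ) [IsLocalizedModule S g] {ι : Type*} [Fintype ι] {u v : ι → M}
    (h : ∀ i, g (u i) = g (v i)) : ∃ s ∈ S, ∀ i, s • u i = s • v i := by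
  classical
  choose s hs using fun i => IsLocalizedModule.exists_of_eq (S := S) (h i)
  refine ⟨∏ i, (s i : R), prod_mem fun i _ => (s i).2, fun i => ?_⟩
  rw [← Finset.prod_erase_mul _ _ (Finset.mem_univ i), mul_smul, mul_smul]
  exact congrArg _ (hs i)

namespace Module

variable {R M : Type*} [CommRing R] [AddCommGroup M] [Module R M]

theorem Flat.quotient_ideal_smul_top [Flat R M] (I : Ideal R) :
    Flat (R ⧸ I) (M ⧸ (I • ⊤ : Submodule R M)) :=
  .of_linearEquiv ((TensorProduct.quotTensorEquivQuotSMul M I).extendScalarsOfSurjective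
    Ideal.Quotient.mk_surjective).symm

theorem Flat.exists_factorization_of_forall_sum_smul_eq_zero [Flat R M] {ι κ : Type*}
    [Fintype ι] [Fintype κ] {c : ι → κ → R} {y : κ → M} (h : ∀ i, ∑ j, c i j • y j = 0) :
    ∃ (l : ℕ) (d : κ → Fin l → R) (w : Fin l → M),
      (∀ j, y j = ∑ m, d j m • w m) ∧ ∀ i m, ∑ j, c i j * d j m = 0 := by
  classical
  let F : (ι →₀ R) →ₗ[R] (κ →₀ R) :=
    Finsupp.linearCombination R fun i => Finsupp.equivFunOnFinite.symm (c i)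
  have hF : Finsupp.linearCombination R y ∘ₗ F = 0 := by
    ext i
    simpa [F, Finsupp.linearCombination_apply, Finsupp.sum_fintype, Finsupp.single_apply] using h i
  obtain ⟨l, A, W, hyW, hAF⟩ := exists_factorization_of_comp_eq_zero_of_free hF
  refine ⟨l, fun j m => A (Finsupp.single j 1) m, fun m => W (Finsupp.single m 1), fun j => ?_,
    fun i m => ?_⟩
  · have hj := LinearMap.congr_fun hyW (Finsupp.single j 1)
    rw [Finsupp.linearCombination_single, one_smul, LinearMap.comp_apply,
      ← Finsupp.univ_sum_single (A _), map_sum] at hj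
    refine hj.trans (Finset.sum_congr rfl fun m _ => ?_)
    rw [← Finsupp.smul_single_one, map_smul]
  · have him := congr($hAF (Finsupp.single i 1) m)
    simp only [F, LinearMap.comp_apply, Finsupp.linearCombination_single, one_smul] at him
    rw [← Finsupp.univ_sum_single (Finsupp.equivFunOnFinite.symm (c i)), map_sum,
      Finsupp.finsetSum_apply] at him
    refine Eq.trans (Finset.sum_congr rfl fun j _ => ?_) him
    rw [Finsupp.coe_equivFunOnFinite_symm, ← Finsupp.smul_single_one, map_smul,
      Finsupp.smul_apply, smul_eq_mul]

theorem IsTrivialRelation.exists_smul_of_isLocalizedModule (S : Submonoid R) {Rₛ Mₛ : Type*}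
    [CommRing Rₛ] [Algebra R Rₛ] [IsLocalization S Rₛ] [AddCommGroup Mₛ] [Module R Mₛ]
    [Module Rₛ Mₛ] [IsScalarTower R Rₛ Mₛ] (g : M →ₗ[R] Mₛ) [IsLocalizedModule S g]
    {ι : Type*} [Fintype ι] {a : ι → R} {x : ι → M}
    (h : IsTrivialRelation (fun i => algebraMap R Rₛ (a i)) (fun i => g (x i))) :
    ∃ s ∈ S, IsTrivialRelation a (s • x) := by
  obtain ⟨k, c, y, hx, hc⟩ := h
  dsimp only at hx hc
  obtain ⟨t, ht⟩ := IsLocalization.exist_integer_multiples_of_finite S (Function.uncurry c)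
  choose c' hc' using ht
  obtain ⟨t', ht'⟩ := IsLocalizedModule.exist_integer_multiples_of_finite S g y
  choose y' hy' using ht'
  have hx' (i : ι) : g (((t : R) * t') • x i) = g (∑ j, c' (i, j) • y' j) := by
    calc g (((t : R) * t') • x i) = (t : R) • (t' : R) • ∑ j, c i j • y j := by
          rw [mul_smul, map_smul, map_smul, hx i]
      _ = ∑ j, ((t : R) • c i j) • ((t' : R) • y j) := by
          simp only [Finset.smul_sum, smul_comm (t' : R), smul_assoc]
      _ = ∑ j, c' (i, j) • g (y' j) := Finset.sum_congr rfl fun j _ => by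
          rw [hy', ← algebraMap_smul Rₛ (c' (i, j)), hc']
          rfl
      _ = g (∑ j, c' (i, j) • y' j) := by simp only [map_sum, map_smul]
  have hc'' (j : Fin k) :
      Algebra.linearMap R Rₛ (∑ i, a i * c' (i, j)) = Algebra.linearMap R Rₛ 0 := by
    simp only [Algebra.linearMap_apply, map_sum, map_mul, hc', Function.uncurry_apply_pair,
      mul_smul_comm, ← Finset.smul_sum, hc j, smul_zero, map_zero]
  obtain ⟨v, hv, hvx⟩ := IsLocalizedModule.exists_smul_eq_smul_of_forall_eq S g hx'
  obtain ⟨w, hw, hwc⟩ :=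
    IsLocalizedModule.exists_smul_eq_smul_of_forall_eq S (Algebra.linearMap R Rₛ) hc''
  refine ⟨v * (t * t') * w, mul_mem (mul_mem hv (mul_mem t.2 t'.2)) hw, k,
    fun i j => w * c' (i, j), fun j => v • y' j, fun i => ?_, fun j => ?_⟩
  · calc (v * (t * t') * w) • x i = w • v • ((t : R) * t') • x i := by
          rw [mul_comm _ (w : R), mul_smul, mul_smul]
      _ = ∑ j, (w * c' (i, j)) • v • y' j := by
          rw [hvx i, Finset.smul_sum, Finset.smul_sum]
          exact Finset.sum_congr rfl fun j _ => by rw [mul_smul, smul_comm v]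
  · simpa only [mul_left_comm _ (w : R), ← Finset.mul_sum, smul_eq_mul, mul_zero] using hwc j

theorem exists_factorization_mod_of_flat_quotient {f : R}
    [Flat (R ⧸ Ideal.span {f}) (M ⧸ (Ideal.span {f} • ⊤ : Submodule R M))]
    {ι κ : Type*} [Fintype ι] [Fintype κ] {c : ι → κ → R} {y : κ → M}
    (h : ∀ i, ∑ j, c i j • y j ∈ (Ideal.span {f} • ⊤ : Submodule R M)) :
    ∃ (l : ℕ) (d : κ → Fin l → R) (w : Fin l → M) (u : κ → M) (e : ι → Fin l → R),
      (∀ j, y j = ∑ m, d j m • w m + f • u j) ∧ ∀ i m, ∑ j, c i j * d j m = e i m * f := by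
  let q := (Ideal.span {f} • ⊤ : Submodule R M).mkQ
  have hq (i : ι) : ∑ j, Ideal.Quotient.mk (Ideal.span {f}) (c i j) • q (y j) = 0 := by
    have hi := h i
    rw [← Submodule.Quotient.mk_eq_zero, ← Submodule.mkQ_apply, map_sum] at hi
    simpa [q, IsTorsionBySet.mk_smul] using hi
  obtain ⟨l, d', w', hyw, hcd⟩ := Flat.exists_factorization_of_forall_sum_smul_eq_zero hq
  choose d hd using fun j m => Ideal.Quotient.mk_surjective (d' j m)
  choose w hw using fun m => Submodule.mkQ_surjective _ (w' m)
  have hu (j : κ) : ∃ u, y j = ∑ m, d j m • w m + f • u := by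
    have hmem : y j - ∑ m, d j m • w m ∈ (Ideal.span {f} • ⊤ : Submodule R M) := by
      rw [← Submodule.Quotient.mk_eq_zero, ← Submodule.mkQ_apply, map_sub, map_sum, sub_eq_zero]
      simpa [q, ← hd, ← hw, IsTorsionBySet.mk_smul] using hyw j
    obtain ⟨u, hu⟩ := Submodule.mem_ideal_span_singleton_smul_top.1 hmem
    exact ⟨u, by rw [hu]; abel⟩
  have he (i : ι) (m : Fin l) : ∃ e, e * f = ∑ j, c i j * d j m := by
    refine Ideal.mem_span_singleton'.1 (Ideal.Quotient.eq_zero_iff_mem.1 ?_)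
    simpa [← hd] using hcd i m
  choose u hu using hu
  choose e he using he
  exact ⟨l, d, w, u, e, hu, fun i m => (he i m).symm⟩

theorem IsTrivialRelation.of_smul {f : R} (hf : f ∈ nonZeroDivisors R) (hM : IsSMulRegular M f)
    [Flat (R ⧸ Ideal.span {f}) (M ⧸ (Ideal.span {f} • ⊤ : Submodule R M))]
    {ι : Type*} [Fintype ι] {a : ι → R} {x : ι → M} (h : IsTrivialRelation a (f • x)) :
    IsTrivialRelation a x := by
  obtain ⟨k, c, y, hx, hc⟩ := h
  have hmem (i : ι) : ∑ j, c i j • y j ∈ (Ideal.span {f} • ⊤ : Submodule R M) :=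
    hx i ▸ Submodule.mem_ideal_span_singleton_smul_top.2 ⟨x i, rfl⟩
  obtain ⟨l, d, w, u, e, hu, he⟩ := exists_factorization_mod_of_flat_quotient hmem
  refine ⟨l + k, fun i => Fin.append (e i) (c i), Fin.append w u, fun i => hM ?_, fun p => ?_⟩
  · simp only [Fin.sum_univ_add, Fin.append_left, Fin.append_right]
    calc f • x i = ∑ j, c i j • y j := hx i
      _ = ∑ j, c i j • (∑ m, d j m • w m + f • u j) := by simp_rw [← hu]
      _ = ∑ m, (∑ j, c i j * d j m) • w m + f • ∑ j, c i j • u j := by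
        simp only [smul_add, Finset.sum_add_distrib, Finset.smul_sum, Finset.sum_smul, mul_smul,
          smul_comm f]
        rw [Finset.sum_comm]
      _ = f • (∑ m, e i m • w m + ∑ j, c i j • u j) := by
        simp only [he, mul_comm _ f, mul_smul, smul_add, Finset.smul_sum]
  · refine Fin.addCases (fun m => ?_) (fun j => ?_) p
    · simp only [Fin.append_left]
      refine (mem_nonZeroDivisors_iff.1 hf).2 _ ?_
      calc (∑ i, a i * e i m) * f = ∑ i, a i * ∑ j, c i j * d j m := by
            simp only [Finset.sum_mul, mul_assoc, he]
        _ = ∑ j, (∑ i, a i * c i j) * d j m := by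
            simp only [Finset.mul_sum, Finset.sum_mul, mul_assoc]
            exact Finset.sum_comm
        _ = 0 := by simp [hc]
    · simpa using hc j

theorem IsTrivialRelation.of_pow_smul {f : R} (hf : f ∈ nonZeroDivisors R)
    (hM : IsSMulRegular M f)
    [Flat (R ⧸ Ideal.span {f}) (M ⧸ (Ideal.span {f} • ⊤ : Submodule R M))]
    {ι : Type*} [Fintype ι] {a : ι → R} {x : ι → M} {n : ℕ}
    (h : IsTrivialRelation a (f ^ n • x)) : IsTrivialRelation a x := by
  induction n with
  | zero => simpa using h
  | succ n ih => exact ih (.of_smul hf hM (by rwa [pow_succ', mul_smul] at h))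

end Module

/-- Flatness over a commutative ring `A` can be tested on the constructible stratification
given by a nonzerodivisor `f`: `M` is flat over `A` iff multiplication by `f` is injective
on `M`, `M/fM` is flat over `A/(f)`, and `M_f` is flat over `A_f`. -/
theorem flat_iff_of_nonZeroDivisor {A : Type*} [CommRing A] (f : A)
    (hf : f ∈ nonZeroDivisors A) (M : Type*) [AddCommGroup M] [Module A M] :
    Module.Flat A M ↔
      (Function.Injective (fun m : M => f • m) ∧
        Module.Flat (A ⧸ Ideal.span {f})
          (M ⧸ (Ideal.span {f} • ⊤ : Submodule A M)) ∧
        Module.Flat (Localization (Submonoid.powers f))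
          (LocalizedModule (Submonoid.powers f) M)) := by
  refine ⟨fun _ => ⟨Module.Flat.isSMulRegular_of_nonZeroDivisors hf,
    Module.Flat.quotient_ideal_smul_top _, inferInstance⟩, ?_⟩
  rintro ⟨hreg, hquot, hloc⟩
  refine Module.Flat.of_forall_isTrivialRelation fun {l a x} hax => ?_
  let g := LocalizedModule.mkLinearMap (Submonoid.powers f) M
  have hrel : ∑ i, algebraMap A (Localization (Submonoid.powers f)) (a i) • g (x i) = 0 := by
    simp only [algebraMap_smul, ← map_smul, ← map_sum, hax, map_zero]
  obtain ⟨_, ⟨n, rfl⟩, htriv⟩ :=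
    Module.IsTrivialRelation.exists_smul_of_isLocalizedModule (.powers f) g
      (Module.Flat.isTrivialRelation_of_sum_smul_eq_zero hrel)
  exact htriv.of_pow_smul hf hreg
end

section
/- Let A be a commutative ring, let f ∈ A, and let M be an A-module. Regard the localization A_f = A[1/f] as an A-module. Assume that Hom_A(A_f, M) = 0 and that the first Ext group Ext¹_A(A_f, M) = 0 (these two vanishings express that the discrete module M is derived f-complete). If M/fM = 0 (equivalently, multiplication by f on M is surjective), then M = 0. -/
/-!
A surjective `f` lets every `m : M` be extended, by repeatedly choosing `f`-th roots, to a
point `(m, m₁, m₂, …)` of the inverse limit `lim (⋯ →·f M →·f M)`. On this limit `f` acts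
invertibly (by the shift), so the point is the image of `1` under an `A`-linear map from
`A[1/f]`; projecting to the first coordinate gives a map `A[1/f] → M` sending `1` to `m`, which
must vanish.
-/

variable {A : Type*} [CommRing A] (f : A) (M : Type*) [AddCommGroup M] [Module A M]

def smulInverseLimit : Submodule A (ℕ → M) where
  carrier := {x | ∀ n, f • x (n + 1) = x n}
  add_mem' hx hy n := by simp only [Pi.add_apply, smul_add, hx n, hy n]
  zero_mem' n := smul_zero f
  smul_mem' a x hx n := by simp only [Pi.smul_apply, smul_comm f a, hx n]

variable {f M}

theorem bijective_smul_smulInverseLimit :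
    Function.Bijective fun x : smulInverseLimit f M => f • x := by
  constructor
  · intro x y hxy
    ext n
    have hn := congr_arg (fun z : smulInverseLimit f M => (z : ℕ → M) (n + 1)) hxy
    simpa only [SetLike.val_smul, Pi.smul_apply, x.2 n, y.2 n] using hn
  · intro x
    exact ⟨⟨fun n => x.1 (n + 1), fun n => x.2 (n + 1)⟩, Subtype.ext <| funext x.2⟩

theorem isUnit_algebraMap_end_smulInverseLimit (s : Submonoid.powers f) :
    IsUnit (algebraMap A (Module.End A (smulInverseLimit f M)) s) := by
  obtain ⟨n, hn⟩ := s.2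
  rw [← hn, map_pow]
  exact ((Module.End.isUnit_iff _).mpr bijective_smul_smulInverseLimit).pow n

theorem exists_mem_smulInverseLimit_eq_of_surjective
    (hsurj : Function.Surjective fun m : M => f • m) (m : M) :
    ∃ x ∈ smulInverseLimit f M, x 0 = m := by
  choose g hg using hsurj
  refine ⟨fun n => g^[n] m, fun n => ?_, rfl⟩
  change f • g^[n + 1] m = g^[n] m
  rw [Function.iterate_succ_apply']
  exact hg _

theorem exists_linearMap_localization_apply_one_eq {S : Submonoid A} {N : Type*} [AddCommGroup N]
    [Module A N] (hS : ∀ s : S, IsUnit (algebraMap A (Module.End A N) s)) (x : N) :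
    ∃ φ : Localization S →ₗ[A] N, φ 1 = x := by
  have h := IsLocalizedModule.lift_apply S (Algebra.linearMap A (Localization S))
    (LinearMap.toSpanSingleton A N x) hS 1
  exact ⟨_, by simpa using h⟩

theorem eq_zero_of_derived_complete_of_smul_surjective_general {A : Type} [CommRing A] (f : A)
    (M : Type) [AddCommGroup M] [Module A M]
    (h0 : Subsingleton (Localization (Submonoid.powers f) →ₗ[A] M))
    (hsurj : Function.Surjective (fun m : M => f • m)) :
    ∀ m : M, m = 0 := by
  intro m
  obtain ⟨x, hx, rfl⟩ := exists_mem_smulInverseLimit_eq_of_surjective hsurj m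
  obtain ⟨φ, hφ⟩ := exists_linearMap_localization_apply_one_eq
    (isUnit_algebraMap_end_smulInverseLimit (M := M)) ⟨x, hx⟩
  let π : smulInverseLimit f M →ₗ[A] M :=
    (LinearMap.proj 0).comp (smulInverseLimit f M).subtype
  calc x 0 = (π ∘ₗ φ) 1 := by simp [π, hφ]
    _ = 0 := by rw [Subsingleton.elim (π ∘ₗ φ) 0, LinearMap.zero_apply]

/-- Classical Nakayama lemma for derived `f`-complete discrete modules: if
`Hom_A(A_f, M) = 0` and `Ext¹_A(A_f, M) = 0` (i.e. the discrete module `M` is derived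
`f`-complete) and `M/fM = 0` (multiplication by `f` on `M` is surjective), then `M = 0`. -/
theorem eq_zero_of_derived_complete_of_smul_surjective {A : Type} [CommRing A] (f : A)
    (M : Type) [AddCommGroup M] [Module A M]
    (h0 : Subsingleton (Localization (Submonoid.powers f) →ₗ[A] M))
    (h1 : Subsingleton
      (((Ext A (ModuleCat A) 1).obj
        (Opposite.op (ModuleCat.of A (Localization (Submonoid.powers f))))).obj
          (ModuleCat.of A M)))
    (hsurj : Function.Surjective (fun m : M => f • m)) :
    ∀ m : M, m = 0 :=
  eq_zero_of_derived_complete_of_smul_surjective_general f M h0 hsurj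
end
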